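/- Suppose α is a continuous rotationally symmetric norm on L^∞(𝕋). Then the dual space of L^α(𝕋) is ℒ^{α′}(𝕋): for every bounded linear functional φ on L^α(𝕋) there exists a (unique a.e.) h ∈ ℒ^{α′}(𝕋) such that φ(f) = ∫_𝕋 f h dm for all f ∈ L^α(𝕋), and ‖φ‖ = α′(h); conversely every h ∈ ℒ^{α′}(𝕋) induces such a functional. -/

import Mathlib

open MeasureTheory Filter
open scoped ENNReal Real

noncomputable section

instance fact_two_pi_pos : Fact ((0:ℝ) < 2 * Real.pi) := ⟨by positivity⟩

/-- The circle `𝕋`, modelled additively as `ℝ / 2πℤ`. -/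
abbrev 𝕋 : Type := AddCircle (2 * Real.pi)

/-- Normalized Haar (arc-length) probability measure on `𝕋`. -/
abbrev m : Measure 𝕋 := AddCircle.haarAddCircle

/-- A rotationally symmetric norm on `L^∞(𝕋)`, extended to all measurable functions via
`α f = sup { α s : s simple, |s| ≤ |f| a.e. }`. -/
structure RotNorm where
  α : (𝕋 → ℂ) → ℝ≥0∞
  ae_eq : ∀ f g : 𝕋 → ℂ, f =ᵐ[m] g → α f = α g
  add_le : ∀ f g : 𝕋 → ℂ, α (f + g) ≤ α f + α g
  smul_eq : ∀ (c : ℂ) (f : 𝕋 → ℂ), α (c • f) = (‖c‖₊ : ℝ≥0∞) * α f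
  one_eq : α 1 = 1
  abs_eq : ∀ f : 𝕋 → ℂ, α (fun z => (‖f z‖ : ℂ)) = α f
  rot_eq : ∀ (w : 𝕋) (f : 𝕋 → ℂ), α (fun z => f (z - w)) = α f
  simple_sup : ∀ f : 𝕋 → ℂ, AEMeasurable f m →
    α f = ⨆ (s : SimpleFunc 𝕋 ℂ) (_ : ∀ᵐ z ∂m, ‖s z‖ ≤ ‖f z‖), α s

/-- `α` is in addition a symmetric gauge norm: invariant under all invertible
measure-preserving transformations of `𝕋`. -/
def RotNorm.IsSymmGauge (N : RotNorm) : Prop :=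
  ∀ φ : 𝕋 ≃ᵐ 𝕋, MeasurePreserving (⇑φ) m m → ∀ f : 𝕋 → ℂ, N.α (f ∘ ⇑φ) = N.α f

/-- Continuity of a norm: `α(χ_E) → 0` as `m(E) → 0⁺`. -/
def IsContNorm (γ : (𝕋 → ℂ) → ℝ≥0∞) : Prop :=
  ∀ ε : ℝ≥0∞, 0 < ε → ∃ δ : ℝ≥0∞, 0 < δ ∧
    ∀ E : Set 𝕋, MeasurableSet E → m E < δ → γ (E.indicator fun _ => (1:ℂ)) < ε

/-- Membership in `ℒ^α(𝕋)`: measurable with finite norm. -/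
def MemScriptL (γ : (𝕋 → ℂ) → ℝ≥0∞) (f : 𝕋 → ℂ) : Prop :=
  AEMeasurable f m ∧ γ f ≠ ∞

/-- Membership in `L^α(𝕋)`: the `α`-closure of `L^∞(𝕋)` in `ℒ^α(𝕋)`. -/
def MemL (γ : (𝕋 → ℂ) → ℝ≥0∞) (f : 𝕋 → ℂ) : Prop :=
  MemScriptL γ f ∧ ∀ ε : ℝ≥0∞, 0 < ε → ∃ g : 𝕋 → ℂ, MemLp g ⊤ m ∧ γ (f - g) < ε

/-- Strong continuity: continuity together with `L^α = ℒ^α`. -/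
def StronglyCont (γ : (𝕋 → ℂ) → ℝ≥0∞) : Prop :=
  IsContNorm γ ∧ ∀ f : 𝕋 → ℂ, MemScriptL γ f → MemL γ f

/-- The dual norm `α′`. -/
def dualOf (γ : (𝕋 → ℂ) → ℝ≥0∞) (f : 𝕋 → ℂ) : ℝ≥0∞ :=
  ⨆ (h : 𝕋 → ℂ) (_ : MemLp h ⊤ m) (_ : γ h ≤ 1), ∫⁻ z, (‖f z * h z‖₊ : ℝ≥0∞) ∂m

/-- The linear span of the analytic monomials `zⁿ`, `n ≥ 0`. -/
def analyticPolys : Submodule ℂ (𝕋 → ℂ) :=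
  Submodule.span ℂ (Set.range fun n : ℕ => ((fourier (n : ℤ) : C(𝕋, ℂ)) : 𝕋 → ℂ))

/-- Membership in `H^α(𝕋)`: the `α`-closure of the span of `{zⁿ : n ≥ 0}`. -/
def MemH (γ : (𝕋 → ℂ) → ℝ≥0∞) (f : 𝕋 → ℂ) : Prop :=
  MemScriptL γ f ∧ ∀ ε : ℝ≥0∞, 0 < ε → ∃ p ∈ analyticPolys, γ (f - p) < ε

/-- Membership in the classical Hardy space `H¹(𝕋)`. -/
def MemH1 (f : 𝕋 → ℂ) : Prop :=
  Integrable f m ∧ ∀ n : ℤ, n < 0 → fourierCoeff f n = 0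

/-- The point `e^{it}` of the unit circle in `ℂ` corresponding to `t ∈ 𝕋`. -/
def eCirc : 𝕋 → ℂ := fun t => (AddCircle.toCircle t : ℂ)

/-!
Bounded functions are dense in `L^α`, and continuity of `α` makes `E ↦ φ(χ_E)` countably
additive and absolutely continuous with respect to `m`; its Radon–Nikodym density `h` represents
`φ` on simple functions, then (by dominated convergence for the continuous norm `α`) on bounded
functions. Testing `φ` against `g · conjSign (h g)` for bounded `g` with `α g ≤ 1` shows
`α′(h) ≤ ‖φ‖ < ∞`, so by Hölder's inequality `|∫ f h| ≤ α′(h) α(f)` both `φ` and `f ↦ ∫ f h`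
are `α`-continuous and agree on the dense subspace `L^∞`, hence everywhere; Hölder's inequality
also gives `‖φ‖ ≤ α′(h)`.
-/

open Set Topology Function
open scoped NNReal

/-- `conj w / |w|` for `w ≠ 0`, and `0` at `0`. -/
def conjSign (w : ℂ) : ℂ := ‖w‖ * w⁻¹

lemma norm_conjSign_le (w : ℂ) : ‖conjSign w‖ ≤ 1 := by
  rcases eq_or_ne w 0 with rfl | hw
  · simp [conjSign]
  · simp [conjSign, hw]

lemma mul_conjSign (w : ℂ) : w * conjSign w = ‖w‖ := by
  rcases eq_or_ne w 0 with rfl | hw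
  · simp [conjSign]
  · simp only [conjSign]
    field_simp

@[fun_prop]
lemma measurable_conjSign : Measurable conjSign := by
  unfold conjSign; fun_prop

lemma MeasureTheory.MemLp.exists_ae_norm_le {X E : Type*} [MeasurableSpace X] {μ : Measure X}
    [NormedAddCommGroup E] {f : X → E} (hf : MemLp f ∞ μ) : ∃ K : ℝ≥0, ∀ᵐ x ∂μ, ‖f x‖ ≤ K := by
  obtain ⟨K, hK⟩ := eLpNormEssSup_lt_top_iff_isBoundedUnder.1
    (by rw [← eLpNorm_exponent_top (f := f) (μ := μ)]; exact hf.2)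
  exact ⟨K, (eventually_map.1 hK).mono fun x hx => NNReal.coe_le_coe.2 hx⟩

lemma Complex.enorm_ofReal_of_nonneg {r : ℝ} (hr : 0 ≤ r) : ‖(r : ℂ)‖ₑ = ENNReal.ofReal r := by
  rw [enorm_eq_nnnorm, Complex.nnnorm_real, ← enorm_eq_nnnorm, Real.enorm_eq_ofReal hr]

section SetFunction

/- `Tendsto ν (comap μ (𝓝 0) ⊓ 𝓟 {s | MeasurableSet s}) (𝓝 0)` says that `ν s → 0` as `μ s → 0`
over measurable sets `s`. -/

variable {X E : Type*} [MeasurableSpace X] {μ : Measure X} [NormedAddCommGroup E]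
  {ν : Set X → E}

lemma eq_zero_of_tendsto_of_measure_eq_zero
    (hν : Tendsto ν (comap μ (𝓝 0) ⊓ 𝓟 {s | MeasurableSet s}) (𝓝 0)) {s : Set X}
    (hs : MeasurableSet s) (h0 : μ s = 0) : ν s = 0 := by
  have hpure : pure s ≤ comap μ (𝓝 0) ⊓ 𝓟 {s | MeasurableSet s} :=
    le_inf (map_le_iff_le_comap.1 (by simp [h0]))
      ((pure_le_principal s).2 hs)
  exact tendsto_nhds_unique (tendsto_pure_nhds ν s) (hν.mono_left hpure)

lemma map_biUnion_finset_of_additive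
    (hadd : ∀ s t, MeasurableSet s → MeasurableSet t → Disjoint s t → ν (s ∪ t) = ν s + ν t)
    {f : ℕ → Set X} (hf : ∀ i, MeasurableSet (f i)) (hd : Pairwise (Disjoint on f))
    (s : Finset ℕ) : ν (⋃ i ∈ s, f i) = ∑ i ∈ s, ν (f i) := by
  induction s using Finset.induction_on with
  | empty => simpa using hadd ∅ ∅ .empty .empty (by simp)
  | insert a s ha ih =>
    rw [Finset.set_biUnion_insert, hadd _ _ (hf a) (s.measurableSet_biUnion fun i _ => hf i),
      ih, Finset.sum_insert ha]
    exact disjoint_iUnion₂_right.2 fun i hi => hd (ne_of_mem_of_not_mem hi ha).symm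

lemma hasSum_of_additive_of_tendsto [IsFiniteMeasure μ]
    (hadd : ∀ s t, MeasurableSet s → MeasurableSet t → Disjoint s t → ν (s ∪ t) = ν s + ν t)
    (hν : Tendsto ν (comap μ (𝓝 0) ⊓ 𝓟 {s | MeasurableSet s}) (𝓝 0))
    {f : ℕ → Set X} (hf : ∀ i, MeasurableSet (f i)) (hd : Pairwise (Disjoint on f)) :
    HasSum (fun i => ν (f i)) (ν (⋃ i, f i)) := by
  set R : Finset ℕ → Set X := fun s => (⋃ i, f i) \ ⋃ i ∈ s, f i
  have hR : ∀ s, MeasurableSet (R s) := fun s =>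
    (MeasurableSet.iUnion hf).diff (s.measurableSet_biUnion fun i _ => hf i)
  have hsum : ∀ s : Finset ℕ, ∑ i ∈ s, ν (f i) = ν (⋃ i, f i) - ν (R s) := fun s => by
    rw [← map_biUnion_finset_of_additive hadd hf hd, eq_sub_iff_add_eq,
      ← hadd _ _ (s.measurableSet_biUnion fun i _ => hf i) (hR s) disjoint_sdiff_right,
      union_sdiff_cancel (iUnion₂_subset fun i _ => subset_iUnion f i)]
  have hR0 : Tendsto (μ ∘ R) atTop (𝓝 0) := by
    have hanti : Antitone R := fun s t hst =>
      sdiff_subset_sdiff_right (biUnion_subset_biUnion_left hst)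
    have hempty : ⋂ s, R s = ∅ := by
      refine eq_empty_of_forall_notMem fun x hx => ?_
      obtain ⟨i, hi⟩ := mem_iUnion.1 (mem_iInter.1 hx ∅).1
      exact (mem_iInter.1 hx {i}).2 (mem_biUnion (Finset.mem_singleton_self i) hi)
    simpa [hempty] using tendsto_measure_iInter_atTop (fun s => (hR s).nullMeasurableSet) hanti
      ⟨∅, measure_ne_top μ _⟩
  have hνR := hν.comp (tendsto_inf.2
    ⟨tendsto_comap_iff.2 hR0, tendsto_principal.2 (Eventually.of_forall hR)⟩)
  show Tendsto _ atTop _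
  simpa [hsum] using tendsto_const_nhds.sub hνR

end SetFunction

theorem MeasureTheory.ComplexMeasure.withDensityᵥ_rnDeriv_eq {X : Type*} [MeasurableSpace X]
    (c : ComplexMeasure X) (μ : Measure X) [SigmaFinite μ]
    (hc : c ≪ᵥ μ.toENNRealVectorMeasure) : μ.withDensityᵥ (c.rnDeriv μ) = c := by
  rw [ComplexMeasure.absolutelyContinuous_ennreal_iff] at hc
  have hint := c.integrable_rnDeriv μ
  ext s hs
  rw [withDensityᵥ_apply hint hs]
  apply Complex.ext
  · change _ = ComplexMeasure.re c s
    conv_rhs => rw [← SignedMeasure.withDensityᵥ_rnDeriv_eq _ μ hc.1]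
    rw [withDensityᵥ_apply (SignedMeasure.integrable_rnDeriv _ _) hs, ← RCLike.re_eq_complex_re,
      ← integral_re hint.integrableOn]
    rfl
  · change _ = ComplexMeasure.im c s
    conv_rhs => rw [← SignedMeasure.withDensityᵥ_rnDeriv_eq _ μ hc.2]
    rw [withDensityᵥ_apply (SignedMeasure.integrable_rnDeriv _ _) hs, ← RCLike.im_eq_complex_im,
      ← integral_im hint.integrableOn]
    rfl

section Density

variable {X : Type*} [MeasurableSpace X] {μ : Measure X}

theorem exists_integrable_setIntegral_eq_of_additive [IsFiniteMeasure μ] {ν : Set X → ℂ}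
    (hadd : ∀ s t, MeasurableSet s → MeasurableSet t → Disjoint s t → ν (s ∪ t) = ν s + ν t)
    (hν : Tendsto ν (comap μ (𝓝 0) ⊓ 𝓟 {s | MeasurableSet s}) (𝓝 0)) :
    ∃ h : X → ℂ, Integrable h μ ∧ ∀ s, MeasurableSet s → ν s = ∫ x in s, h x ∂μ := by
  classical
  let c : ComplexMeasure X :=
    { measureOf' := fun s => if MeasurableSet s then ν s else 0
      empty' := by
        simpa using eq_zero_of_tendsto_of_measure_eq_zero hν .empty measure_empty
      not_measurable' := fun s hs => if_neg hs
      m_iUnion' := fun f hf hd => by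
        simpa only [if_pos (hf _), if_pos (MeasurableSet.iUnion hf)]
          using hasSum_of_additive_of_tendsto hadd hν hf hd }
  have hc : ∀ s, MeasurableSet s → c s = ν s := fun s hs => if_pos hs
  have hac : c ≪ᵥ μ.toENNRealVectorMeasure := .mk fun s hs h0 => by
    rw [Measure.toENNRealVectorMeasure_apply_measurable hs] at h0
    rw [hc s hs, eq_zero_of_tendsto_of_measure_eq_zero hν hs h0]
  refine ⟨c.rnDeriv μ, c.integrable_rnDeriv μ, fun s hs => ?_⟩
  rw [← hc s hs, ← withDensityᵥ_apply (c.integrable_rnDeriv μ) hs,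
    c.withDensityᵥ_rnDeriv_eq μ hac]

/-- Testing against the bounded function `conjSign (g - h) / (1 + |g| + |h|)` turns the
integral of `|g - h| / (1 + |g| + |h|)` into `0`. -/
theorem ae_eq_of_forall_integral_mul_eq [IsFiniteMeasure μ] {g h : X → ℂ}
    (hg : AEMeasurable g μ) (hh : AEMeasurable h μ)
    (H : ∀ f : X → ℂ, AEMeasurable f μ → (∀ x, ‖f x‖ ≤ 1) →
      ∫ x, f x * g x ∂μ = ∫ x, f x * h x ∂μ) :
    g =ᵐ[μ] h := by
  set w : X → ℝ := fun x => (1 + ‖g x‖ + ‖h x‖)⁻¹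
  have hw : ∀ x, 0 < w x := fun x => inv_pos.2 (by positivity)
  set f : X → ℂ := fun x => conjSign (g x - h x) * (w x : ℂ)
  have hfm : AEMeasurable f μ := by fun_prop
  have hf_mul_le : ∀ x {a : ℂ}, ‖a‖ ≤ 1 + ‖g x‖ + ‖h x‖ → ‖f x * a‖ ≤ 1 := fun x a ha => by
    rw [norm_mul, norm_mul, Complex.norm_real, Real.norm_of_nonneg (hw x).le]
    calc ‖conjSign (g x - h x)‖ * w x * ‖a‖ ≤ 1 * w x * (1 + ‖g x‖ + ‖h x‖) := by
          gcongr
          exact norm_conjSign_le _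
      _ = 1 := by rw [one_mul]; exact inv_mul_cancel₀ (by positivity)
  have hint : ∀ k : X → ℂ, AEMeasurable k μ → (∀ x, ‖k x‖ ≤ 1 + ‖g x‖ + ‖h x‖) →
      Integrable (fun x => f x * k x) μ := fun k hk hk_le =>
    .of_bound (hfm.mul hk).aestronglyMeasurable 1 (ae_of_all _ fun x => hf_mul_le x (hk_le x))
  have hf_sub : ∀ x, f x * (g x - h x) = ((‖g x - h x‖ * w x : ℝ) : ℂ) := fun x => by
    calc f x * (g x - h x) = (g x - h x) * conjSign (g x - h x) * w x := by ring
      _ = _ := by rw [mul_conjSign]; push_cast; ring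
  have hint_sub := hint (g - h) (hg.sub hh) fun x => by
    rw [Pi.sub_apply]
    linarith [norm_sub_le (g x) (h x)]
  have hzero : ∫ x, f x * (g x - h x) ∂μ = 0 := by
    simp_rw [mul_sub]
    rw [integral_sub (hint g hg fun x => by linarith [norm_nonneg (h x)])
      (hint h hh fun x => by linarith [norm_nonneg (g x)]), sub_eq_zero]
    exact H f hfm fun x => by simpa using hf_mul_le x (a := 1) (by simp [add_assoc]; positivity)
  simp_rw [hf_sub, integral_complex_ofReal, Complex.ofReal_eq_zero] at hzero
  have hint_real : Integrable (fun x => ‖g x - h x‖ * w x) μ :=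
    hint_sub.re.congr (ae_of_all _ fun x => by simp [hf_sub])
  filter_upwards
    [(integral_eq_zero_iff_of_nonneg (fun x => by positivity [hw x]) hint_real).1 hzero] with x hx
  have hx' : ‖g x - h x‖ * w x = 0 := hx
  exact sub_eq_zero.1 (norm_eq_zero.1 ((mul_eq_zero.1 hx').resolve_right (hw x).ne'))

end Density

lemma IsContNorm.tendsto_indicator {γ : (𝕋 → ℂ) → ℝ≥0∞} (hγ : IsContNorm γ) :
    Tendsto (fun E : Set 𝕋 => γ (E.indicator fun _ => (1 : ℂ)))
      (comap m (𝓝 0) ⊓ 𝓟 {E | MeasurableSet E}) (𝓝 0) := by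
  refine ENNReal.tendsto_nhds_zero.2 fun ε hε => ?_
  obtain ⟨δ, hδ, H⟩ := hγ ε hε
  filter_upwards [inter_mem_inf (preimage_mem_comap (Iio_mem_nhds hδ)) (mem_principal_self _)]
    with E hE using (H E hE.2 hE.1).le

namespace RotNorm

variable (N : RotNorm)

lemma α_zero : N.α 0 = 0 := by
  simpa using N.smul_eq 0 0

lemma α_neg (f : 𝕋 → ℂ) : N.α (-f) = N.α f := by
  simpa using N.smul_eq (-1) f

lemma α_sub_le (f g : 𝕋 → ℂ) : N.α (f - g) ≤ N.α f + N.α g := by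
  simpa [sub_eq_add_neg, α_neg] using N.add_le f (-g)

lemma α_const (c : ℂ) : N.α (fun _ => c) = ‖c‖ₑ := by
  rw [show (fun _ => c) = c • (1 : 𝕋 → ℂ) by ext; simp, N.smul_eq, N.one_eq, mul_one]
  rfl

variable {N}

lemma α_mono {f g : 𝕋 → ℂ} (hf : AEMeasurable f m) (hg : AEMeasurable g m)
    (hfg : ∀ᵐ z ∂m, ‖f z‖ ≤ ‖g z‖) : N.α f ≤ N.α g := by
  rw [N.simple_sup f hf, N.simple_sup g hg]
  exact iSup_mono fun s => iSup_mono' fun hs =>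
    ⟨hs.mp (hfg.mono fun z h1 h2 => h2.trans h1), le_rfl⟩

lemma α_le_of_ae_norm_le {f : 𝕋 → ℂ} (hf : AEMeasurable f m) {K : ℝ≥0}
    (hK : ∀ᵐ z ∂m, ‖f z‖ ≤ K) : N.α f ≤ K := by
  calc N.α f ≤ N.α (fun _ => ((K : ℝ) : ℂ)) := α_mono hf aemeasurable_const (by simpa using hK)
    _ = K := by
      rw [N.α_const, Complex.enorm_ofReal_of_nonneg K.coe_nonneg, ENNReal.ofReal_coe_nnreal]

lemma memL_of_memLp_top {f : 𝕋 → ℂ} (hf : MemLp f ∞ m) : MemL N.α f := by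
  obtain ⟨K, hK⟩ := hf.exists_ae_norm_le
  refine ⟨⟨hf.1.aemeasurable, ?_⟩, fun ε hε => ⟨f, hf, by simpa [N.α_zero] using hε⟩⟩
  exact ne_top_of_le_ne_top ENNReal.coe_ne_top (α_le_of_ae_norm_le hf.1.aemeasurable hK)

lemma α_le_ofReal_add_mul_α_indicator {f : 𝕋 → ℂ} (hf : AEMeasurable f m) {E : Set 𝕋}
    (hE : MeasurableSet E) {η : ℝ} (hη : 0 ≤ η) {M : ℝ≥0}
    (hfE : ∀ᵐ z ∂m, ‖f z‖ ≤ η + E.indicator (fun _ => (M : ℝ)) z) :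
    N.α f ≤ ENNReal.ofReal η + M * N.α (E.indicator fun _ => 1) := by
  set G : 𝕋 → ℂ := (fun _ => (η : ℂ)) + ((M : ℝ) : ℂ) • E.indicator fun _ => 1
  have hG : ∀ z, ‖G z‖ = η + E.indicator (fun _ => (M : ℝ)) z := fun z => by
    by_cases hz : z ∈ E
    · simp only [G, Pi.add_apply, Pi.smul_apply, indicator_of_mem hz, smul_eq_mul, mul_one]
      exact_mod_cast Complex.norm_of_nonneg (by positivity)
    · simp [G, hz, hη]
  calc N.α f ≤ N.α G := α_mono hf
        (measurable_const.add ((measurable_const.indicator hE).const_smul _)).aemeasurable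
        (hfE.mono fun z hz => (hG z).symm ▸ hz)
    _ ≤ _ := (N.add_le _ _).trans_eq (by
      rw [N.α_const, N.smul_eq, ← enorm_eq_nnnorm, Complex.enorm_ofReal_of_nonneg hη,
        Complex.enorm_ofReal_of_nonneg M.coe_nonneg, ENNReal.ofReal_coe_nnreal])

theorem tendsto_α_sub_of_tendsto_ae (hN : IsContNorm N.α) {F : ℕ → 𝕋 → ℂ} {f : 𝕋 → ℂ}
    (hF : ∀ n, Measurable (F n)) (hf : Measurable f) {M : ℝ≥0}
    (hM : ∀ n, ∀ᵐ z ∂m, ‖f z - F n z‖ ≤ M) (hlim : ∀ᵐ z ∂m, Tendsto (F · z) atTop (𝓝 (f z))) :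
    Tendsto (fun n => N.α (f - F n)) atTop (𝓝 0) := by
  refine ENNReal.tendsto_nhds_zero.2 fun ε hε => ?_
  rcases eq_or_ne ε ∞ with rfl | hε_top
  · exact Eventually.of_forall fun _ => le_top
  set η : ℝ := (ε / 2).toReal
  have hε2 : ε / 2 ≠ ∞ := ENNReal.div_ne_top hε_top two_ne_zero
  have hη : 0 < η := ENNReal.toReal_pos (ENNReal.half_pos hε.ne').ne' hε2
  set E : ℕ → Set 𝕋 := fun n => {z | ENNReal.ofReal η ≤ edist (F n z) (f z)}
  have hE : ∀ n, MeasurableSet (E n) := fun n =>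
    measurableSet_le measurable_const ((hF n).edist hf)
  have hmE : Tendsto (m ∘ E) atTop (𝓝 0) :=
    tendstoInMeasure_of_tendsto_ae (fun n => (hF n).aestronglyMeasurable) hlim _
      (ENNReal.ofReal_pos.2 hη)
  have hαE := hN.tendsto_indicator.comp
    (tendsto_inf.2 ⟨tendsto_comap_iff.2 hmE, tendsto_principal.2 (.of_forall hE)⟩)
  have hsmall : ∀ᶠ n in atTop, (M : ℝ≥0∞) * N.α ((E n).indicator fun _ => 1) ≤ ε / 2 :=
    ENNReal.tendsto_nhds_zero.1
      (by simpa using ENNReal.Tendsto.const_mul hαE (.inr ENNReal.coe_ne_top)) _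
      (ENNReal.half_pos hε.ne')
  filter_upwards [hsmall] with n hn
  have hfE : ∀ᵐ z ∂m, ‖(f - F n) z‖ ≤ η + (E n).indicator (fun _ => (M : ℝ)) z := by
    filter_upwards [hM n] with z hz
    rw [Pi.sub_apply]
    by_cases hzE : z ∈ E n
    · rw [indicator_of_mem hzE]
      linarith
    · rw [indicator_of_notMem hzE, add_zero, ← dist_eq_norm, dist_comm]
      simp only [E, mem_ofPred_eq, not_le, edist_dist] at hzE
      exact ((ENNReal.ofReal_lt_ofReal_iff hη).1 hzE).le
  calc N.α (f - F n) ≤ ENNReal.ofReal η + M * N.α ((E n).indicator fun _ => 1) :=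
        α_le_ofReal_add_mul_α_indicator (hf.sub (hF n)).aemeasurable (hE n) hη.le hfE
    _ ≤ ε / 2 + ε / 2 := add_le_add (ENNReal.ofReal_toReal hε2).le hn
    _ = ε := ENNReal.add_halves ε

end RotNorm

namespace MemL

variable {N : RotNorm} {f g : 𝕋 → ℂ}

lemma sub (hf : MemL N.α f) (hg : MemL N.α g) : MemL N.α (f - g) := by
  refine ⟨⟨hf.1.1.sub hg.1.1, ne_top_of_le_ne_top (ENNReal.add_ne_top.2 ⟨hf.1.2, hg.1.2⟩)
    (N.α_sub_le f g)⟩, fun ε hε => ?_⟩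
  obtain ⟨p, hp, hfp⟩ := hf.2 (ε / 2) (ENNReal.half_pos hε.ne')
  obtain ⟨q, hq, hgq⟩ := hg.2 (ε / 2) (ENNReal.half_pos hε.ne')
  refine ⟨p - q, hp.sub hq, ?_⟩
  calc N.α (f - g - (p - q)) = N.α ((f - p) - (g - q)) := by rw [sub_sub_sub_comm]
    _ ≤ N.α (f - p) + N.α (g - q) := N.α_sub_le _ _
    _ < ε / 2 + ε / 2 := ENNReal.add_lt_add hfp hgq
    _ = ε := ENNReal.add_halves ε

lemma exists_seq_tendsto (hf : MemL N.α f) :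
    ∃ g : ℕ → 𝕋 → ℂ, (∀ n, MemLp (g n) ∞ m) ∧ Tendsto (fun n => N.α (f - g n)) atTop (𝓝 0) := by
  choose g hg hfg using fun n : ℕ =>
    hf.2 (n : ℝ≥0∞)⁻¹ (ENNReal.inv_pos.2 (ENNReal.natCast_ne_top n))
  exact ⟨g, hg, tendsto_of_tendsto_of_tendsto_of_le_of_le tendsto_const_nhds
    ENNReal.tendsto_inv_nat_nhds_zero (fun _ => bot_le) fun n => (hfg n).le⟩

end MemL

section DualNorm

variable {N : RotNorm} {f g h : 𝕋 → ℂ}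

lemma lintegral_mul_le_dualOf (hg : MemLp g ∞ m) (hα : N.α g ≤ 1) :
    ∫⁻ z, ‖h z * g z‖ₑ ∂m ≤ dualOf N.α h :=
  le_iSup₂_of_le g hg (le_iSup_of_le hα le_rfl)

/-- Test the definition of `α′` against `f / (α f + ε)` and let `ε → 0`. -/
lemma lintegral_mul_le_dualOf_mul_of_memLp_top (hD : dualOf N.α h ≠ ∞) (hf : MemLp f ∞ m) :
    ∫⁻ z, ‖f z * h z‖ₑ ∂m ≤ dualOf N.α h * N.α f := by
  have hfα : N.α f ≠ ∞ := (RotNorm.memL_of_memLp_top hf).1.2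
  have key : ∀ ε : ℝ≥0, 0 < ε → ∫⁻ z, ‖f z * h z‖ₑ ∂m ≤ dualOf N.α h * (N.α f + ε) := by
    intro ε hε
    have h0 : N.α f + ε ≠ 0 := by positivity
    have htop : N.α f + ε ≠ ∞ := ENNReal.add_ne_top.2 ⟨hfα, ENNReal.coe_ne_top⟩
    set c : ℂ := ((N.α f + ε)⁻¹.toReal : ℂ)
    have hc : (‖c‖₊ : ℝ≥0∞) = (N.α f + ε)⁻¹ := by
      rw [← enorm_eq_nnnorm, Complex.enorm_ofReal_of_nonneg ENNReal.toReal_nonneg,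
        ENNReal.ofReal_toReal (ENNReal.inv_ne_top.2 h0)]
    have hcf : N.α (c • f) ≤ 1 := by
      rw [N.smul_eq, hc]
      exact ENNReal.inv_mul_le_iff h0 htop |>.2 (by rw [mul_one]; exact le_self_add)
    have := lintegral_mul_le_dualOf (h := h) (hf.const_smul c) hcf
    rw [mul_comm (dualOf N.α h), ← ENNReal.inv_mul_le_iff h0 htop, ← hc,
      ← lintegral_const_mul' _ _ ENNReal.coe_ne_top]
    refine le_of_eq_of_le (lintegral_congr fun z => ?_) this
    simp only [Pi.smul_apply, smul_eq_mul, enorm_eq_nnnorm, ← ENNReal.coe_mul, ← nnnorm_mul]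
    ring_nf
  have hlim : Tendsto (fun ε : ℝ≥0 => dualOf N.α h * (N.α f + ε)) (𝓝[>] 0)
      (𝓝 (dualOf N.α h * N.α f)) := by
    refine ENNReal.Tendsto.const_mul ?_ (.inr hD)
    have : Tendsto (fun ε : ℝ≥0 => N.α f + ε) (𝓝[>] 0) (𝓝 (N.α f + (0 : ℝ≥0))) :=
      tendsto_const_nhds.add (ENNReal.tendsto_coe.2 (tendsto_nhdsWithin_of_tendsto_nhds tendsto_id))
    simpa using this
  exact ge_of_tendsto hlim (eventually_nhdsWithin_of_forall fun ε hε => key ε hε)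

lemma lintegral_mul_le_dualOf_mul (hD : dualOf N.α h ≠ ∞) (hf : AEMeasurable f m) :
    ∫⁻ z, ‖f z * h z‖ₑ ∂m ≤ dualOf N.α h * N.α f := by
  set S : ℕ → Set 𝕋 := fun n => {z | ‖f z‖ ≤ n}
  have hS : ∀ n, NullMeasurableSet (S n) m := fun n =>
    nullMeasurableSet_le hf.norm aemeasurable_const
  have hS_mono : Monotone S := fun i j hij z (hz : ‖f z‖ ≤ i) =>
    show ‖f z‖ ≤ j from hz.trans (Nat.cast_le.2 hij)
  have hS_univ : ⋃ n, S n = univ :=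
    eq_univ_of_forall fun z => mem_iUnion.2 ⟨⌈‖f z‖⌉₊, show ‖f z‖ ≤ _ from Nat.le_ceil _⟩
  have hfS : ∀ n, AEMeasurable ((S n).indicator f) m := fun n =>
    (hf.aestronglyMeasurable.indicator₀ (hS n)).aemeasurable
  calc ∫⁻ z, ‖f z * h z‖ₑ ∂m = ⨆ n, ∫⁻ z in S n, ‖f z * h z‖ₑ ∂m := by
        simp_rw [← withDensity_apply', ← hS_mono.measure_iUnion, hS_univ, withDensity_apply',
          Measure.restrict_univ]
    _ = ⨆ n, ∫⁻ z, ‖(S n).indicator f z * h z‖ₑ ∂m := by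
        congr 1; ext n
        rw [← lintegral_indicator₀ (hS n)]
        congr 1; ext z
        by_cases hz : z ∈ S n <;> simp [hz]
    _ ≤ ⨆ n, dualOf N.α h * N.α ((S n).indicator f) := by
        refine iSup_mono fun n => lintegral_mul_le_dualOf_mul_of_memLp_top hD ?_
        refine memLp_top_of_bound (hfS n).aestronglyMeasurable n (ae_of_all _ fun z => ?_)
        by_cases hz : z ∈ S n
        · rw [indicator_of_mem hz]
          exact hz
        · simp [hz]
    _ ≤ dualOf N.α h * N.α f := iSup_le fun n => by
        gcongr
        exact RotNorm.α_mono (hfS n) hf (ae_of_all _ fun z => norm_indicator_le_norm_self f z)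

lemma integrable_mul_of_dualOf_ne_top (hh : AEMeasurable h m) (hD : dualOf N.α h ≠ ∞)
    (hf : MemL N.α f) : Integrable (fun z => f z * h z) m :=
  ⟨(hf.1.1.mul hh).aestronglyMeasurable, (lintegral_mul_le_dualOf_mul hD hf.1.1).trans_lt
    (ENNReal.mul_lt_top hD.lt_top hf.1.2.lt_top)⟩

lemma enorm_integral_mul_le (hD : dualOf N.α h ≠ ∞) (hf : AEMeasurable f m) :
    ‖∫ z, f z * h z ∂m‖ₑ ≤ dualOf N.α h * N.α f :=
  (enorm_integral_le_lintegral_enorm _).trans (lintegral_mul_le_dualOf_mul hD hf)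

end DualNorm

structure IsBoundedFunctional (N : RotNorm) (φ : (𝕋 → ℂ) → ℂ) : Prop where
  map_add : ∀ f g : 𝕋 → ℂ, MemL N.α f → MemL N.α g → φ (f + g) = φ f + φ g
  map_smul : ∀ (c : ℂ) (f : 𝕋 → ℂ), MemL N.α f → φ (c • f) = c * φ f
  exists_bound : ∃ C : ℝ≥0∞, C ≠ ∞ ∧ ∀ f : 𝕋 → ℂ, MemL N.α f → (‖φ f‖₊ : ℝ≥0∞) ≤ C * N.α f

def functionalNorm (N : RotNorm) (φ : (𝕋 → ℂ) → ℂ) : ℝ≥0∞ :=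
  ⨆ (f : 𝕋 → ℂ) (_ : MemL N.α f) (_ : N.α f ≤ 1), (‖φ f‖₊ : ℝ≥0∞)

lemma isBoundedFunctional_integral_mul {N : RotNorm} {h : 𝕋 → ℂ} (hh : AEMeasurable h m)
    (hD : dualOf N.α h ≠ ∞) : IsBoundedFunctional N fun f => ∫ z, f z * h z ∂m where
  map_add f g hf hg := by
    simp only [Pi.add_apply, add_mul]
    exact integral_add (integrable_mul_of_dualOf_ne_top hh hD hf)
      (integrable_mul_of_dualOf_ne_top hh hD hg)
  map_smul c f _ := by
    simp only [Pi.smul_apply, smul_eq_mul, mul_assoc]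
    exact integral_const_mul c _
  exists_bound := ⟨_, hD, fun f hf => enorm_integral_mul_le hD hf.1.1⟩

lemma functionalNorm_le_dualOf {N : RotNorm} {φ : (𝕋 → ℂ) → ℂ} {h : 𝕋 → ℂ}
    (hD : dualOf N.α h ≠ ∞) (hrep : ∀ f, MemL N.α f → φ f = ∫ z, f z * h z ∂m) :
    functionalNorm N φ ≤ dualOf N.α h :=
  iSup₂_le fun f hf => iSup_le fun hα => by
    rw [hrep f hf, ← enorm_eq_nnnorm]
    calc ‖∫ z, f z * h z ∂m‖ₑ ≤ dualOf N.α h * N.α f := enorm_integral_mul_le hD hf.1.1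
      _ ≤ dualOf N.α h := mul_le_of_le_one_right' hα

namespace IsBoundedFunctional

variable {N : RotNorm} {φ : (𝕋 → ℂ) → ℂ} (hφ : IsBoundedFunctional N φ) {h : 𝕋 → ℂ}
include hφ

lemma map_zero : φ 0 = 0 := by
  simpa using hφ.map_smul 0 0 (RotNorm.memL_of_memLp_top MemLp.zero)

lemma map_sub {f g : 𝕋 → ℂ} (hf : MemL N.α f) (hg : MemL N.α g) : φ (f - g) = φ f - φ g := by
  rw [eq_sub_iff_add_eq, ← hφ.map_add _ _ (hf.sub hg) hg, sub_add_cancel]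

lemma functionalNorm_ne_top : functionalNorm N φ ≠ ∞ := by
  obtain ⟨C, hC, hbound⟩ := hφ.exists_bound
  refine ne_top_of_le_ne_top hC (iSup₂_le fun f hf => iSup_le fun hα => ?_)
  exact (hbound f hf).trans (mul_le_of_le_one_right' hα)

lemma tendsto {ι : Type*} {l : Filter ι} {F : ι → 𝕋 → ℂ} {f : 𝕋 → ℂ} (hf : MemL N.α f)
    (hF : ∀ᶠ i in l, MemL N.α (F i)) (hlim : Tendsto (fun i => N.α (f - F i)) l (𝓝 0)) :
    Tendsto (fun i => φ (F i)) l (𝓝 (φ f)) := by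
  obtain ⟨C, hC, hbound⟩ := hφ.exists_bound
  rw [tendsto_iff_edist_tendsto_0]
  refine tendsto_of_tendsto_of_tendsto_of_le_of_le' tendsto_const_nhds
    (by simpa using ENNReal.Tendsto.const_mul hlim (.inr hC)) (.of_forall fun _ => bot_le)
    (hF.mono fun i hi => ?_)
  rw [edist_comm, edist_eq_enorm_sub, ← hφ.map_sub hf hi]
  exact hbound _ (hf.sub hi)

lemma congr_ae {f g : 𝕋 → ℂ} (hf : MemL N.α f) (hg : MemL N.α g) (hfg : f =ᵐ[m] g) :
    φ f = φ g := by
  obtain ⟨C, -, hbound⟩ := hφ.exists_bound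
  have := hbound _ (hf.sub hg)
  rwa [N.ae_eq _ 0 hfg.sub_eq, N.α_zero, mul_zero, nonpos_iff_eq_zero, ENNReal.coe_eq_zero,
    nnnorm_eq_zero, hφ.map_sub hf hg, sub_eq_zero] at this

lemma eq_of_forall_memLp_top {ψ : (𝕋 → ℂ) → ℂ} (hψ : IsBoundedFunctional N ψ)
    (H : ∀ g, MemLp g ∞ m → φ g = ψ g) {f : 𝕋 → ℂ} (hf : MemL N.α f) : φ f = ψ f := by
  obtain ⟨g, hg, hlim⟩ := hf.exists_seq_tendsto
  have hgL : ∀ᶠ n in atTop, MemL N.α (g n) := .of_forall fun n => RotNorm.memL_of_memLp_top (hg n)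
  exact tendsto_nhds_unique ((hφ.tendsto hf hgL hlim).congr fun n => H _ (hg n))
    (hψ.tendsto hf hgL hlim)

lemma exists_density (hN : IsContNorm N.α) :
    ∃ h : 𝕋 → ℂ, Integrable h m ∧
      ∀ E, MeasurableSet E → φ (E.indicator fun _ => 1) = ∫ z in E, h z ∂m := by
  have hmem : ∀ {E : Set 𝕋}, MeasurableSet E → MemL N.α (E.indicator fun _ => 1) := fun hE =>
    RotNorm.memL_of_memLp_top (memLp_top_const 1 |>.indicator hE)
  refine exists_integrable_setIntegral_eq_of_additive (fun s t hs ht hst => ?_) ?_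
  · rw [indicator_union_of_disjoint hst]
    exact hφ.map_add _ _ (hmem hs) (hmem ht)
  · have := hφ.tendsto (f := 0) (F := fun E : Set 𝕋 => E.indicator fun _ => 1)
      (l := comap m (𝓝 0) ⊓ 𝓟 {E | MeasurableSet E})
      (RotNorm.memL_of_memLp_top MemLp.zero)
      ((eventually_principal.2 fun E hE => hmem hE).filter_mono inf_le_right)
      (by simpa only [zero_sub, N.α_neg] using hN.tendsto_indicator)
    rwa [hφ.map_zero] at this

lemma eq_integral_mul_of_simpleFunc (hint : Integrable h m)
    (hE : ∀ E, MeasurableSet E → φ (E.indicator fun _ => 1) = ∫ z in E, h z ∂m)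
    (s : SimpleFunc 𝕋 ℂ) : φ s = ∫ z, s z * h z ∂m := by
  have hmem : ∀ s : SimpleFunc 𝕋 ℂ, MemL N.α s := fun s =>
    RotNorm.memL_of_memLp_top (s.memLp_top m)
  induction s using SimpleFunc.induction with
  | @const c A hA =>
    have hcoe : ⇑(SimpleFunc.piecewise A hA (.const 𝕋 c) (.const 𝕋 0))
        = c • A.indicator fun _ => 1 := by
      ext z; by_cases hz : z ∈ A <;> simp [hz]
    rw [hcoe, hφ.map_smul c _ (RotNorm.memL_of_memLp_top (memLp_top_const 1 |>.indicator hA)),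
      hE A hA, ← integral_const_mul, ← integral_indicator hA]
    congr 1; ext z; by_cases hz : z ∈ A <;> simp [hz]
  | @add f g _ hf hg =>
    rw [SimpleFunc.coe_add, hφ.map_add _ _ (hmem f) (hmem g), hf, hg,
      ← integral_add (f := fun z => f z * h z) (g := fun z => g z * h z)
        (hint.mul_of_top_right (f.memLp_top m)) (hint.mul_of_top_right (g.memLp_top m))]
    simp only [Pi.add_apply, add_mul]

lemma eq_integral_mul_of_memLp_top (hN : IsContNorm N.α) (hint : Integrable h m)
    (hE : ∀ E, MeasurableSet E → φ (E.indicator fun _ => 1) = ∫ z in E, h z ∂m)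
    {f : 𝕋 → ℂ} (hf : MemLp f ∞ m) : φ f = ∫ z, f z * h z ∂m := by
  set g := hf.1.aemeasurable.mk f
  have hg : Measurable g := hf.1.aemeasurable.measurable_mk
  have hfg : f =ᵐ[m] g := hf.1.aemeasurable.ae_eq_mk
  have hgL : MemLp g ∞ m := hf.ae_eq hfg
  rw [hφ.congr_ae (RotNorm.memL_of_memLp_top hf) (RotNorm.memL_of_memLp_top hgL) hfg,
    integral_congr_ae (g := fun z => g z * h z) (hfg.mono fun z hz => by simp only [hz])]
  obtain ⟨K, hK⟩ := hgL.exists_ae_norm_le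
  set s : ℕ → SimpleFunc 𝕋 ℂ := fun n => SimpleFunc.approxOn g hg univ 0 trivial n
  have hs_lim : ∀ z, Tendsto (fun n => s n z) atTop (𝓝 (g z)) := fun z =>
    SimpleFunc.tendsto_approxOn hg (mem_univ 0) (subset_closure (mem_univ _))
  have hs_le : ∀ n, ∀ᵐ z ∂m, ‖s n z‖ ≤ 2 * K := fun n => hK.mono fun z hz => by
    linarith [SimpleFunc.norm_approxOn_zero_le hg (mem_univ 0) z n]
  have hφs : Tendsto (fun n => φ (s n)) atTop (𝓝 (φ g)) := by
    refine hφ.tendsto (RotNorm.memL_of_memLp_top hgL)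
      (.of_forall fun n => RotNorm.memL_of_memLp_top ((s n).memLp_top m)) ?_
    refine RotNorm.tendsto_α_sub_of_tendsto_ae hN (fun n => (s n).measurable) hg (M := 3 * K)
      (fun n => (hK.and (hs_le n)).mono fun z hz => ?_) (ae_of_all _ hs_lim)
    push_cast
    linarith [norm_sub_le (g z) (s n z)]
  have hints : Tendsto (fun n => ∫ z, s n z * h z ∂m) atTop (𝓝 (∫ z, g z * h z ∂m)) := by
    refine tendsto_integral_of_dominated_convergence (fun z => 2 * K * ‖h z‖)
      (fun n => (s n).aestronglyMeasurable.mul hint.1) (hint.norm.const_mul _)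
      (fun n => (hs_le n).mono fun z hz => ?_) (ae_of_all _ fun z => (hs_lim z).mul_const _)
    rw [norm_mul]
    gcongr
  exact tendsto_nhds_unique (hφs.congr fun n => hφ.eq_integral_mul_of_simpleFunc hint hE (s n))
    hints

end IsBoundedFunctional

/-- Testing `α′(h)` against `g` is the same as evaluating `φ` at `g · conjSign (h g)`, which
has `α` at most `α g`. -/
lemma dualOf_le_functionalNorm {N : RotNorm} {φ : (𝕋 → ℂ) → ℂ} {h : 𝕋 → ℂ}
    (hint : Integrable h m)
    (hrep : ∀ g, MemLp g ∞ m → φ g = ∫ z, g z * h z ∂m) :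
    dualOf N.α h ≤ functionalNorm N φ := by
  refine iSup₂_le fun g hg => iSup_le fun hα => ?_
  set F : 𝕋 → ℂ := fun z => g z * conjSign (h z * g z)
  have hF_le : ∀ z, ‖F z‖ ≤ ‖g z‖ := fun z => by
    rw [norm_mul]
    exact mul_le_of_le_one_right (norm_nonneg _) (norm_conjSign_le _)
  have hFm : AEMeasurable F m := by
    have := hg.1.aemeasurable
    have := hint.aemeasurable
    fun_prop
  have hF : MemLp F ∞ m := hg.of_le hFm.aestronglyMeasurable (ae_of_all _ hF_le)
  have hFh : ∀ z, F z * h z = ((‖h z * g z‖ : ℝ) : ℂ) := fun z => by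
    rw [← mul_conjSign]
    ring
  have hφF : ∫⁻ z, ‖h z * g z‖ₑ ∂m = ‖φ F‖ₑ := by
    rw [hrep F hF, integral_congr_ae (ae_of_all _ hFh), integral_complex_ofReal,
      Complex.enorm_ofReal_of_nonneg (integral_nonneg fun _ => norm_nonneg _),
      ofReal_integral_norm_eq_lintegral_enorm]
    exact (hint.mul_of_top_right hg).congr (ae_of_all _ fun z => mul_comm (g z) (h z))
  exact hφF.trans_le (le_iSup₂_of_le F (RotNorm.memL_of_memLp_top hF)
    (le_iSup_of_le ((RotNorm.α_mono hFm hg.1.aemeasurable (ae_of_all _ hF_le)).trans hα) le_rfl))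

/-- The dual space of `L^α(𝕋)` is `ℒ^{α′}(𝕋)`: every bounded linear
functional on `L^α(𝕋)` is integration against a unique `h ∈ ℒ^{α′}(𝕋)` with `‖φ‖ = α′(h)`,
and conversely every such `h` induces a bounded functional. -/
theorem dual_space_of_Lalpha
    (N : RotNorm) (hN : IsContNorm N.α) :
    (∀ φ : (𝕋 → ℂ) → ℂ,
      (∀ f g : 𝕋 → ℂ, MemL N.α f → MemL N.α g → φ (f + g) = φ f + φ g) →
      (∀ (c : ℂ) (f : 𝕋 → ℂ), MemL N.α f → φ (c • f) = c * φ f) →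
      (∀ f g : 𝕋 → ℂ, MemL N.α f → MemL N.α g → f =ᵐ[m] g → φ f = φ g) →
      (∃ C : ℝ≥0∞, C ≠ ∞ ∧ ∀ f : 𝕋 → ℂ, MemL N.α f → (‖φ f‖₊ : ℝ≥0∞) ≤ C * N.α f) →
      ∃ h : 𝕋 → ℂ, AEMeasurable h m ∧ dualOf N.α h ≠ ∞ ∧
        (∀ f : 𝕋 → ℂ, MemL N.α f → φ f = ∫ z, f z * h z ∂m) ∧
        (dualOf N.α h
          = ⨆ (f : 𝕋 → ℂ) (_ : MemL N.α f) (_ : N.α f ≤ 1), (‖φ f‖₊ : ℝ≥0∞)) ∧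
        (∀ h' : 𝕋 → ℂ, AEMeasurable h' m →
          (∀ f : 𝕋 → ℂ, MemL N.α f → φ f = ∫ z, f z * h' z ∂m) → h' =ᵐ[m] h)) ∧
    (∀ h : 𝕋 → ℂ, AEMeasurable h m → dualOf N.α h ≠ ∞ →
      ∀ f : 𝕋 → ℂ, MemL N.α f →
        Integrable (fun z => f z * h z) m ∧
        (‖∫ z, f z * h z ∂m‖₊ : ℝ≥0∞) ≤ dualOf N.α h * N.α f) := by
  refine ⟨fun φ hadd hsmul _ hbound => ?_, fun h hh hD f hf =>
    ⟨integrable_mul_of_dualOf_ne_top hh hD hf, enorm_integral_mul_le hD hf.1.1⟩⟩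
  have hφ : IsBoundedFunctional N φ := ⟨hadd, hsmul, hbound⟩
  obtain ⟨h, hint, hE⟩ := hφ.exists_density hN
  have hbdd : ∀ g, MemLp g ∞ m → φ g = ∫ z, g z * h z ∂m := fun g =>
    hφ.eq_integral_mul_of_memLp_top hN hint hE
  have hD : dualOf N.α h ≠ ∞ :=
    ne_top_of_le_ne_top hφ.functionalNorm_ne_top (dualOf_le_functionalNorm hint hbdd)
  have hrep : ∀ f, MemL N.α f → φ f = ∫ z, f z * h z ∂m := fun f =>
    hφ.eq_of_forall_memLp_top (isBoundedFunctional_integral_mul hint.aemeasurable hD) hbdd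
  refine ⟨h, hint.aemeasurable, hD, hrep, le_antisymm (dualOf_le_functionalNorm hint hbdd)
    (functionalNorm_le_dualOf hD hrep), fun h' hh' hrep' => ?_⟩
  refine ae_eq_of_forall_integral_mul_eq hh' hint.aemeasurable fun f hf hf1 => ?_
  have hfL : MemL N.α f := RotNorm.memL_of_memLp_top
    (memLp_top_of_bound hf.aestronglyMeasurable 1 (ae_of_all _ hf1))
  rw [← hrep' f hfL, hrep f hfL]

end
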